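/- Let K be a field of characteristic 2, let α, β ∈ K∖{0} with α ≠ β, and set λ = 1 and μ = 1 in the definition of the binary octic forms F₁ and F₂. Then F₁ and F₂ are not equivalent under automorphisms of ℙ¹ fixing the point (0:1): there exist no a, d, e ∈ K∖{0} and c ∈ K such that F₁(a·u, c·u + d·v) = e·F₂(u,v) in K[u,v]. -/
import Mathlib


/-!  Formalization of a statement from "Two kinds of examples of curves with
isomorphic complements" (J. Blanc). -/

open MvPolynomial

noncomputable section

/-- The coefficients `c₀, …, c₇` (and `0` beyond index `7`):
`c₀ = 3α²β²`, `c₁ = 13α²β²μ`, `c₂ = 22α²β²μ²`, `c₃ = −3αβ(λ⁴(α+β) − 6αβμ³)`,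
`c₄ = −αβμ(8λ⁴β − 7αβμ³ + 6λ⁴α)`, `c₅ = −αβμ²(3λ⁴α − αβμ³ + 7λ⁴β)`,
`c₆ = λ⁴(λ⁴(αβ + α² + β²) − 2αβ²μ³)`, `c₇ = λ⁸β²μ`, with `a = α`, `b = β`,
`l = λ`, `m = μ`. -/
def cc (K : Type) [Field K] (a b l m : K) : ℕ → K
  | 0 => 3 * a ^ 2 * b ^ 2
  | 1 => 13 * a ^ 2 * b ^ 2 * m
  | 2 => 22 * a ^ 2 * b ^ 2 * m ^ 2
  | 3 => -(3 * a * b * (l ^ 4 * (a + b) - 6 * a * b * m ^ 3))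
  | 4 => -(a * b * m * (8 * l ^ 4 * b - 7 * a * b * m ^ 3 + 6 * l ^ 4 * a))
  | 5 => -(a * b * m ^ 2 * (3 * l ^ 4 * a - a * b * m ^ 3 + 7 * l ^ 4 * b))
  | 6 => l ^ 4 * (l ^ 4 * (a * b + a ^ 2 + b ^ 2) - 2 * a * b ^ 2 * m ^ 3)
  | 7 => l ^ 8 * b ^ 2 * m
  | _ => 0

/-- The binary octic form `F₁(u,v) = v·Σ_{i=0}^{7} cᵢ·uⁱ·v^{7−i}` in `K[u,v]`, with
`u = X 0`, `v = X 1`.  The form `F₂` is `F1 K b a l m`, i.e. `F₁` with the roles of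
`α` and `β` exchanged. -/
def F1 (K : Type) [Field K] (a b l m : K) : MvPolynomial (Fin 2) K :=
  X 1 * ∑ i ∈ Finset.range 8, C (cc K a b l m i) * (X 0) ^ i * (X 1) ^ (7 - i)

set_option maxHeartbeats 4000000 in
/-- if `char K = 2` then, for any `α, β ∈ K∖{0}` with `α ≠ β` and
`λ = μ = 1`, the octic forms `F₁` and `F₂` are not equivalent under any automorphism
`(u,v) ↦ (p·u, c·u + d·v)` of `ℙ¹` fixing `(0:1)`. -/
theorem statement16 (K : Type) [Field K] [CharP K 2] (a b : K) (ha : a ≠ 0)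
    (hb : b ≠ 0) (hab : a ≠ b) :
    ¬ ∃ (p d e c : K), p ≠ 0 ∧ d ≠ 0 ∧ e ≠ 0 ∧
      aeval ![C p * (X 0 : MvPolynomial (Fin 2) K), C c * X 0 + C d * X 1]
          (F1 K a b 1 1)
        = C e * F1 K b a 1 1 := by
  rintro ⟨p, d, e, c, hp, hd, he, heq⟩
  have h2 : (2 : K) = 0 := by exact_mod_cast CharP.cast_eq_zero K 2
  have H := congrArg (fun q => aeval ![Polynomial.X, (1 : Polynomial K)] q) heq
  simp only [F1, cc, Finset.sum_range_succ, Finset.sum_range_zero, map_add, map_mul, map_pow,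
    map_neg, map_sub, map_one, map_ofNat, aeval_X, aeval_C, MvPolynomial.algebraMap_eq,
    Polynomial.algebraMap_eq, Matrix.cons_val_zero, Matrix.cons_val_one, Matrix.head_cons,
    zero_add, one_pow, mul_one, one_mul] at H
  have key :
      Polynomial.C (d^8 * (1*(3*a^2*b^2))) * Polynomial.X ^ 0 + Polynomial.C (d^7 * (8*c*(3*a^2*b^2) + p*(13*a^2*b^2))) * Polynomial.X ^ 1 + Polynomial.C (d^6 * (28*c^2*(3*a^2*b^2) + 7*c*p*(13*a^2*b^2) + p^2*(22*a^2*b^2))) * Polynomial.X ^ 2 + Polynomial.C (d^5 * (56*c^3*(3*a^2*b^2) + 21*c^2*p*(13*a^2*b^2) + 6*c*p^2*(22*a^2*b^2) + p^3*(-(3*a*b*((a+b) - 6*a*b))))) * Polynomial.X ^ 3 + Polynomial.C (d^4 * (70*c^4*(3*a^2*b^2) + 35*c^3*p*(13*a^2*b^2) + 15*c^2*p^2*(22*a^2*b^2) + 5*c*p^3*(-(3*a*b*((a+b) - 6*a*b))) + p^4*(-(a*b*(8*b - 7*a*b + 6*a))))) * Polynomial.X ^ 4 + Polynomial.C (d^3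 * (56*c^5*(3*a^2*b^2) + 35*c^4*p*(13*a^2*b^2) + 20*c^3*p^2*(22*a^2*b^2) + 10*c^2*p^3*(-(3*a*b*((a+b) - 6*a*b))) + 4*c*p^4*(-(a*b*(8*b - 7*a*b + 6*a))) + p^5*(-(a*b*(3*a - a*b + 7*b))))) * Polynomial.X ^ 5 + Polynomial.C (d^2 * (28*c^6*(3*a^2*b^2) + 21*c^5*p*(13*a^2*b^2) + 15*c^4*p^2*(22*a^2*b^2) + 10*c^3*p^3*(-(3*a*b*((a+b) - 6*a*b))) + 6*c^2*p^4*(-(a*b*(8*b - 7*a*b + 6*a))) + 3*c*p^5*(-(a*b*(3*a - a*b + 7*b))) + p^6*((a*b+a^2+b^2) - 2*a*b^2))) * Polynomial.X ^ 6 + Polynomial.C (d * (8*c^7*(3*a^2*b^2) + 7*c^6*p*(13*a^2*b^2) + 6*c^5*p^2*(22*a^2*b^2) + 5*c^4*p^3*(-(3*a*b*((a+b) - 6*a*b))) + 4*c^3*p^4*(-(a*b*(8*b - 7*a*b + 6*a))) + 3*c^2*p^5*(-(a*b*(3*a - a*b + 7*b))) + 2*c*p^6*((a*b+a^2+b^2)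 - 2*a*b^2) + p^7*(b^2))) * Polynomial.X ^ 7 + Polynomial.C ((c^8*(3*a^2*b^2) + c^7*p*(13*a^2*b^2) + c^6*p^2*(22*a^2*b^2) + c^5*p^3*(-(3*a*b*((a+b) - 6*a*b))) + c^4*p^4*(-(a*b*(8*b - 7*a*b + 6*a))) + c^3*p^5*(-(a*b*(3*a - a*b + 7*b))) + c^2*p^6*((a*b+a^2+b^2) - 2*a*b^2) + c*p^7*(b^2))) * Polynomial.X ^ 8
      =
      Polynomial.C (e * (3*b^2*a^2)) * Polynomial.X ^ 0 + Polynomial.C (e * (13*b^2*a^2)) * Polynomial.X ^ 1 + Polynomial.C (e * (22*b^2*a^2)) * Polynomial.X ^ 2 + Polynomial.C (e * (-(3*b*a*((b+a) - 6*b*a)))) * Polynomial.X ^ 3 + Polynomial.C (e * (-(b*a*(8*a - 7*b*a + 6*b)))) * Polynomial.X ^ 4 + Polynomial.C (e * (-(b*a*(3*b - b*a + 7*a)))) * Polynomial.X ^ 5 + Polynomial.C (e * ((b*a+b^2+a^2) - 2*b*a^2)) * Polynomial.X ^ 6 + Polynomial.C (e * (a^2)) * Polynomial.X ^ 7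
      := by
    simp only [map_add, map_mul, map_pow, map_neg, map_sub, map_one, map_ofNat]
    linear_combination H
  have h0 := congrArg (fun q : Polynomial K => q.coeff 0) key
  have h1 := congrArg (fun q : Polynomial K => q.coeff 1) key
  have hc2 := congrArg (fun q : Polynomial K => q.coeff 2) key
  have h7 := congrArg (fun q : Polynomial K => q.coeff 7) key
  simp only [Polynomial.coeff_add, Polynomial.coeff_C_mul, Polynomial.coeff_X_pow]
    at h0 h1 hc2 h7
  norm_num at h0 h1 hc2 h7
  have hab2 : a ^ 2 * b ^ 2 ≠ 0 := mul_ne_zero (pow_ne_zero _ ha) (pow_ne_zero _ hb)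
  have t0 : a ^ 2 * b ^ 2 * (d ^ 8 - e) = 0 := by
    linear_combination h0 - a ^ 2 * b ^ 2 * (d ^ 8 - e) * h2
  have he8 : e = d ^ 8 := (sub_eq_zero.mp ((mul_eq_zero.mp t0).resolve_left hab2)).symm
  have t1 : a ^ 2 * b ^ 2 * d ^ 7 * (p - d) = 0 := by
    linear_combination h1 + (13 * a ^ 2 * b ^ 2) * he8 +
      (-6 * a ^ 2 * b ^ 2 * p * d ^ 7 + 6 * a ^ 2 * b ^ 2 * d ^ 8 -
        12 * a ^ 2 * b ^ 2 * c * d ^ 7) * h2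
  have hpd : p = d := sub_eq_zero.mp ((mul_eq_zero.mp t1).resolve_left
    (mul_ne_zero hab2 (pow_ne_zero _ hd)))
  have t2 : a ^ 2 * b ^ 2 * p * d ^ 6 * c = 0 := by
    linear_combination hc2 + (22 * a ^ 2 * b ^ 2) * he8 +
      (-45 * a ^ 2 * b ^ 2 * c * p * d ^ 6 - 42 * a ^ 2 * b ^ 2 * c ^ 2 * d ^ 6 -
        11 * a ^ 2 * b ^ 2 * p ^ 2 * d ^ 6 + 11 * a ^ 2 * b ^ 2 * d ^ 8) * h2
  have hc : c = 0 := (mul_eq_zero.mp t2).resolve_left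
    (mul_ne_zero (mul_ne_zero hab2 hp) (pow_ne_zero _ hd))
  rw [hc, hpd, he8] at h7
  have t7 : b ^ 2 = a ^ 2 := mul_left_cancel₀ (pow_ne_zero 8 hd) (by linear_combination h7)
  have hsq : (a - b) ^ 2 = 0 := by linear_combination t7 + (a ^ 2 - a * b) * h2
  exact hab (sub_eq_zero.mp ((pow_eq_zero_iff (by norm_num : (2:ℕ) ≠ 0)).mp hsq))



end
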